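/- Let Ω be nonempty and X, Y, Z uncertain variables with finite ranges such that X − Y − Z is a Markov chain (⟦X | Z = z, Y = y⟧ = ⟦X | Y = y⟧ for all (y,z) in the joint range of (Y,Z)). Then L⋆(X → Z) ≤ L⋆(X → Y). -/
import Mathlib


open Set

/-- Conditional range ⟦X | Y = y⟧ = {X ω : Y ω = y}. -/
def crange {Ω 𝕏 𝕐 : Type*} (X : Ω → 𝕏) (Y : Ω → 𝕐) (y : 𝕐) : Set 𝕏 :=
  {x | ∃ ω, Y ω = y ∧ X ω = x}

/-- min_{y ∈ ⟦Y⟧} |⟦X | Y = y⟧|. -/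
noncomputable def minCond {Ω 𝕏 𝕐 : Type*} (X : Ω → 𝕏) (Y : Ω → 𝕐) : ℕ :=
  sInf ((fun y => (crange X Y y).ncard) '' Set.range Y)

/-- Non-stochastic brute-force guessing leakage
L(X → Y) = log₂(|⟦X⟧| / min_{y ∈ ⟦Y⟧} |⟦X|Y=y⟧|). -/
noncomputable def leak {Ω 𝕏 𝕐 : Type*} (X : Ω → 𝕏) (Y : Ω → 𝕐) : ℝ :=
  Real.logb 2 (((Set.range X).ncard : ℝ) / (minCond X Y : ℝ))

/-- Maximal non-stochastic brute-force leakage (closed formula)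
L⋆(X → Y) = log₂(|⟦X⟧| − min_{y∈⟦Y⟧}|⟦X|Y=y⟧| + 1). -/
noncomputable def maxLeak {Ω 𝕏 𝕐 : Type*} (X : Ω → 𝕏) (Y : Ω → 𝕐) : ℝ :=
  Real.logb 2 (((Set.range X).ncard : ℝ) - (minCond X Y : ℝ) + 1)

lemma crange_subset_range {Ω 𝕏 𝕐 : Type*} (X : Ω → 𝕏) (Y : Ω → 𝕐) (y : 𝕐) :
    crange X Y y ⊆ Set.range X := by
  rintro x ⟨ω, -, rfl⟩; exact ⟨ω, rfl⟩

theorem stmt_11 {Ω 𝕏 𝕐 ℤt : Type*} [Nonempty Ω] (X : Ω → 𝕏) (Y : Ω → 𝕐) (Z : Ω → ℤt)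
    (hX : (Set.range X).Finite) (hY : (Set.range Y).Finite) (hZ : (Set.range Z).Finite)
    (hMarkov : ∀ y z, (∃ ω, Y ω = y ∧ Z ω = z) →
      {x | ∃ ω, Z ω = z ∧ Y ω = y ∧ X ω = x} = crange X Y y) :
    maxLeak X Z ≤ maxLeak X Y := by
  -- the infimum for Z is attained since range Z is nonempty
  have hne : ((fun z => (crange X Z z).ncard) '' Set.range Z).Nonempty :=
    (Set.range_nonempty Z).image _
  have hmem : minCond X Z ∈ (fun z => (crange X Z z).ncard) '' Set.range Z :=
    Nat.sInf_mem hne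
  obtain ⟨z0, ⟨ω0, rfl⟩, hz0⟩ := hmem
  set z0 := Z ω0
  set y0 := Y ω0
  have hMark := hMarkov y0 z0 ⟨ω0, rfl, rfl⟩
  have hsub : crange X Y y0 ⊆ crange X Z z0 := by
    intro x hx
    rw [← hMark] at hx
    obtain ⟨ω, hz, -, hxx⟩ := hx
    exact ⟨ω, hz, hxx⟩
  have hfin : (crange X Z z0).Finite := hX.subset (crange_subset_range X Z z0)
  have h1 : minCond X Y ≤ (crange X Y y0).ncard :=
    Nat.sInf_le ⟨y0, ⟨ω0, rfl⟩, rfl⟩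
  have h2 : (crange X Y y0).ncard ≤ (crange X Z z0).ncard :=
    Set.ncard_le_ncard hsub hfin
  have hz0' : (crange X Z z0).ncard = minCond X Z := hz0
  have hYZ : minCond X Y ≤ minCond X Z := by omega
  have hZX : minCond X Z ≤ (Set.range X).ncard := by
    rw [← hz0']; exact Set.ncard_le_ncard (crange_subset_range X Z z0) hX
  unfold maxLeak
  apply Real.logb_le_logb_of_le (by norm_num : (1:ℝ) < 2)
  · have : (minCond X Z : ℝ) ≤ ((Set.range X).ncard : ℝ) := by exact_mod_cast hZX
    linarith
  · have : (minCond X Y : ℝ) ≤ (minCond X Z : ℝ) := by exact_mod_cast hYZ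
    linarith
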